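/- There is no continuous map T : S → S, where S is the Riemann surface of the q-th root (q ≥ 2), covering the translation z ↦ z + c on ℂ for any fixed c ≠ 0: precisely, if π : S → ℂ is the q-sheeted ramified covering with ramification point over 0, there exists no continuous T : S → S with π ∘ T = (· + c) ∘ π. -/

import Mathlib

/-!
A continuous lift `T` of `z ↦ z + c` through `w ↦ w ^ q` is a continuous `q`-th root of
`w ^ q + c`. On the connected set where `w ^ q + c ≠ 0`, the ratio `T (ζ * w) / T w` for a
`q`-th root of unity `ζ` is a continuous `q`-th root of unity, hence constant, and it is `1` at
`w = 0` because `c ≠ 0`. So `T` is constant on the fibres of `w ↦ w ^ q` and descends along this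
open quotient map to a continuous `G` with `G z ^ q = z + c`; then `z ↦ G (z - c)` is a
continuous `q`-th root of the identity on `ℂ`, which does not exist for `q ≥ 2`: `g (u ^ q) / u`
would be a constant `g 1`, contradicting `g (ζ ^ q) = g 1` for a primitive root `ζ ≠ 1`.
-/

open Polynomial

section RootsOfUnity

variable {X : Type*} [TopologicalSpace X] {S : Set X} {n : ℕ}

theorem IsPreconnected.eq_of_pow_eq_one {R : Type*} [CommRing R] [IsDomain R]
    [TopologicalSpace R] [T1Space R] (hS : IsPreconnected S) {f : X → R}
    (hf : ContinuousOn f S) (hn : n ≠ 0) (hpow : ∀ x ∈ S, f x ^ n = 1) {x y : X}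
    (hx : x ∈ S) (hy : y ∈ S) : f x = f y :=
  hS.constant_of_mapsTo (nthRootsFinset n (1 : R)).finite_toSet.isDiscrete hf
    (fun z hz => (mem_nthRootsFinset (Nat.pos_of_ne_zero hn) 1).2 (hpow z hz)) hx hy

theorem IsPreconnected.div_eq_div_of_pow_eq_pow {K : Type*} [Field K] [TopologicalSpace K]
    [IsTopologicalDivisionRing K] [T1Space K] (hS : IsPreconnected S) {f g : X → K}
    (hf : ContinuousOn f S) (hg : ContinuousOn g S) (hg0 : ∀ x ∈ S, g x ≠ 0) (hn : n ≠ 0)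
    (hfg : ∀ x ∈ S, f x ^ n = g x ^ n) {x y : X} (hx : x ∈ S) (hy : y ∈ S) :
    f x / g x = f y / g y :=
  hS.eq_of_pow_eq_one (f := fun x => f x / g x) (hf.div hg hg0) hn
    (fun z hz => by rw [div_pow, hfg z hz, div_self (pow_ne_zero n (hg0 z hz))]) hx hy

end RootsOfUnity

theorem Topology.IsQuotientMap.exists_continuous_comp_eq {X Y Z : Type*} [TopologicalSpace X]
    [TopologicalSpace Y] [TopologicalSpace Z] {f : X → Y} (hf : IsQuotientMap f) {g : X → Z}
    (hg : Continuous g) (hgf : Function.FactorsThrough g f) :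
    ∃ G : Y → Z, Continuous G ∧ G ∘ f = g := by
  have hGf : (g ∘ Function.surjInv hf.surjective) ∘ f = g :=
    funext fun x => hgf (Function.surjInv_eq hf.surjective (f x))
  exact ⟨_, hf.continuous_iff.2 (by rwa [hGf]), hGf⟩

namespace Complex

theorem not_exists_continuous_pow_eq_id {q : ℕ} (hq : 2 ≤ q) :
    ¬ ∃ g : ℂ → ℂ, Continuous g ∧ ∀ z, g z ^ q = z := by
  rintro ⟨g, hg, hgq⟩
  have hq0 : q ≠ 0 := by omega
  have hratio : ∀ u ≠ 0, g (u ^ q) / u = g 1 := fun u hu => by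
    simpa using (isConnected_compl_singleton_of_one_lt_rank (by simp) (0 : ℂ)).isPreconnected
      |>.div_eq_div_of_pow_eq_pow (f := fun u => g (u ^ q)) (g := id) (by fun_prop)
        continuousOn_id (fun _ => id) hq0 (fun u _ => hgq _) hu (one_ne_zero (α := ℂ))
  obtain ⟨ζ, hζ⟩ : ∃ ζ : ℂ, IsPrimitiveRoot ζ q := ⟨_, isPrimitiveRoot_exp q hq0⟩
  have hg1 : g 1 ≠ 0 := fun h => by simpa [h, zero_pow hq0] using hgq 1
  have hζ1 := hratio ζ (hζ.ne_zero hq0)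
  rw [hζ.pow_eq_one, div_eq_iff (hζ.ne_zero hq0)] at hζ1
  exact hζ.ne_one (by omega) ((left_eq_mul₀ hg1).1 hζ1)

variable {q : ℕ} {c : ℂ} {T : ℂ → ℂ}

theorem apply_mul_eq_of_pow_eq_pow_add (hq : q ≠ 0) (hc : c ≠ 0) (hT : Continuous T)
    (hTq : ∀ w, T w ^ q = w ^ q + c) {ζ : ℂ} (hζ : ζ ^ q = 1) (w : ℂ) : T (ζ * w) = T w := by
  have hTζ : ∀ w, T (ζ * w) ^ q = T w ^ q := fun w => by rw [hTq, hTq, mul_pow, hζ, one_mul]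
  set U : Set ℂ := {w | T w ≠ 0}
  have hU : IsPreconnected U := by
    have hU_eq : U = (nthRootsFinset q (-c) : Set ℂ)ᶜ := Set.ext fun w => by
      rw [Set.mem_ofPred_eq, Ne, ← pow_eq_zero_iff hq, hTq, ← eq_neg_iff_add_eq_zero]
      exact not_congr (mem_nthRootsFinset (Nat.pos_of_ne_zero hq) (-c)).symm
    rw [hU_eq]
    exact ((nthRootsFinset q (-c)).finite_toSet.countable.isConnected_compl_of_one_lt_rank
      (by simp)).isPreconnected
  by_cases hw : T w = 0
  · rw [hw, ← pow_eq_zero_iff hq, hTζ, hw, zero_pow hq]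
  · have h0 : T 0 ≠ 0 := fun h => hc (by simpa [h, zero_pow hq] using (hTq 0).symm)
    have := hU.div_eq_div_of_pow_eq_pow (f := fun w => T (ζ * w)) (by fun_prop)
      hT.continuousOn (fun _ => id) hq (fun w _ => hTζ w) (x := w) hw h0
    rwa [mul_zero, div_self h0, div_eq_one_iff_eq hw] at this

theorem factorsThrough_pow_of_pow_eq_pow_add (hq : q ≠ 0) (hc : c ≠ 0) (hT : Continuous T)
    (hTq : ∀ w, T w ^ q = w ^ q + c) : Function.FactorsThrough T (· ^ q) := by
  intro w₁ w₂ (h : w₁ ^ q = w₂ ^ q)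
  rcases eq_or_ne w₂ 0 with rfl | hw₂
  · rw [(pow_eq_zero_iff hq).1 (h.trans (zero_pow hq))]
  · have hζ : (w₁ / w₂) ^ q = 1 := by rw [div_pow, h, div_self (pow_ne_zero q hw₂)]
    rw [← apply_mul_eq_of_pow_eq_pow_add hq hc hT hTq hζ w₂, div_mul_cancel₀ w₁ hw₂]

end Complex

/-- The Riemann surface of the `q`-th root is identified with `ℂ`, the covering `π` becoming
`w ↦ w ^ q`. -/
theorem no_continuous_translation_on_root_surface (q : ℕ) (hq : 2 ≤ q)
    (c : ℂ) (hc : c ≠ 0) :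
    ¬ ∃ T : ℂ → ℂ, Continuous T ∧ ∀ w : ℂ, (T w) ^ q = w ^ q + c := by
  rintro ⟨T, hT, hTq⟩
  have : NeZero q := ⟨by omega⟩
  have hquot := (Complex.isOpenQuotientMap_pow q).isQuotientMap
  obtain ⟨G, hG, hGT⟩ := hquot.exists_continuous_comp_eq hT
    (Complex.factorsThrough_pow_of_pow_eq_pow_add (NeZero.ne q) hc hT hTq)
  refine Complex.not_exists_continuous_pow_eq_id hq ⟨fun z => G (z - c), by fun_prop, fun z => ?_⟩
  obtain ⟨w, hw : w ^ q = z - c⟩ := hquot.surjective (z - c)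
  calc G (z - c) ^ q = T w ^ q := by rw [← hw, ← hGT, Function.comp_apply]
    _ = z := by rw [hTq, hw, sub_add_cancel]
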